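/- arXiv:1410.1436 — 2 statements merged into one kernel-verified Lean document; each statement's English description precedes it below -/
import Mathlib

section
/- Let d ≥ 1, 0 < s_ν ≤ d, and let ν be a compactly supported Borel measure on ℝ^d satisfying the s_ν-dimensional Frostman condition. Then for every η > 0 there exists a constant C = C(η) > 0 such that for every integer j ≥ 0 and every f ∈ L²(ν), ∫_{2^j ≤ |ξ| ≤ 2^{j+1}} |𝔽(fν)(ξ)|² dξ ≤ C · 2^{j(d − s_ν + η)} ‖f‖²_{L²(ν)}. -/
open MeasureTheory Metric Filter Set
open scoped ENNReal NNReal Topology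

noncomputable section

/-- The surface measure on the unit sphere `S^{d-1} ⊆ ℝ^d`:
the `(d-1)`-dimensional Hausdorff measure restricted to the sphere. -/
def sphMeas (d : ℕ) : Measure (EuclideanSpace ℝ (Fin d)) :=
  (μH[(d : ℝ) - 1]).restrict (Metric.sphere 0 1)

/-- `σ_t`: the pushforward of the surface measure under dilation `z ↦ t • z`. -/
def sphMeasAt (d : ℕ) (t : ℝ) : Measure (EuclideanSpace ℝ (Fin d)) :=
  (sphMeas d).map (fun z => t • z)

/-- The Fourier transform of the measure `f dμ`:
`𝔽(fμ)(ξ) = ∫ e^{-2πi x·ξ} f(x) dμ(x)`. -/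
def fourierM {d : ℕ} (μ : Measure (EuclideanSpace ℝ (Fin d)))
    (f : EuclideanSpace ℝ (Fin d) → ℂ) (ξ : EuclideanSpace ℝ (Fin d)) : ℂ :=
  ∫ x, Complex.exp ((-(2 * Real.pi * (inner ℝ x ξ : ℝ)) : ℝ) * Complex.I) * f x ∂μ

/-- The (closed) support of a Borel measure: points all of whose neighborhoods
have positive measure. -/
def measSupp {d : ℕ} (μ : Measure (EuclideanSpace ℝ (Fin d))) :
    Set (EuclideanSpace ℝ (Fin d)) :=
  {x | ∀ r : ℝ, 0 < r → 0 < μ (Metric.ball x r)}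

/-- The `s`-dimensional Frostman condition with constant `C`:
`μ(B(x,r)) ≤ C r^s` for all `x` and all `r > 0`. -/
def IsFrostman {d : ℕ} (μ : Measure (EuclideanSpace ℝ (Fin d))) (s C : ℝ) : Prop :=
  ∀ (x : EuclideanSpace ℝ (Fin d)) (r : ℝ), 0 < r →
    μ (Metric.closedBall x r) ≤ ENNReal.ofReal (C * r ^ s)

/-- A measure is compactly supported. -/
def HasCompactSupportM {d : ℕ} (μ : Measure (EuclideanSpace ℝ (Fin d))) : Prop :=
  ∃ K : Set (EuclideanSpace ℝ (Fin d)), IsCompact K ∧ μ Kᶜ = 0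

/-- The mollified convolution `(λ * ρ_ε)(w) = ∫ ε^{-d} ρ(ε⁻¹ (w - z)) dλ(z)`
of a measure `λ` with the rescaled bump `ρ_ε`. -/
def mollify (d : ℕ) (ρ : EuclideanSpace ℝ (Fin d) → ℝ) (ε : ℝ)
    (lam : Measure (EuclideanSpace ℝ (Fin d))) (w : EuclideanSpace ℝ (Fin d)) : ℝ :=
  ∫ z, (ε ^ d)⁻¹ * ρ (ε⁻¹ • (w - z)) ∂lam

/-- The mollified spherical average `A_t^ε f(x) = ∫ (σ_t * ρ_ε)(x - y) f(y) dμ(y)`. -/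
def mollAvg (d : ℕ) (ρ : EuclideanSpace ℝ (Fin d) → ℝ)
    (μ : Measure (EuclideanSpace ℝ (Fin d))) (ε t : ℝ)
    (f : EuclideanSpace ℝ (Fin d) → ℂ) (x : EuclideanSpace ℝ (Fin d)) : ℂ :=
  ∫ y, mollify d ρ ε (sphMeasAt d t) (x - y) • f y ∂μ

/- On the ball `|ξ| ≤ R` the weight `exp (-|ξ|²/R²)` is at least `e⁻¹`. Expanding `|𝔽(fν)|²` and
integrating in `ξ` first, the weighted integral becomes the Fourier transform of the Gaussian tested
against `f ⊗ f̄`, i.e. `(πR²)^{d/2} ∫∫ f(x) conj (f y) exp (-π²R²|x - y|²) dν dν`. As the kernel is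
symmetric, `2 |f(x) f(y)| ≤ |f(x)|² + |f(y)|²` bounds this by
`(πR²)^{d/2} · sup_x ∫ exp (-π²R²|x - y|²) dν(y) · ‖f‖²`, and slicing the Gaussian into balls of
radius `(n + 1)/(πR)`, the Frostman condition bounds the supremum by a multiple of `R^{-s}`.
The annulus `2^j ≤ |ξ| ≤ 2^{j+1}` lies in the ball of radius `R = 2^{j+1}`. -/

open Real Complex ComplexConjugate

theorem ENNReal.two_mul_le_add_sq (a b : ℝ≥0∞) : 2 * a * b ≤ a ^ 2 + b ^ 2 := by
  rcases eq_or_ne a ⊤ with rfl | ha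
  · simp
  rcases eq_or_ne b ⊤ with rfl | hb
  · simp
  lift a to ℝ≥0 using ha
  lift b to ℝ≥0 using hb
  exact_mod_cast _root_.two_mul_le_add_sq a b

theorem summable_add_one_rpow_mul_exp_neg_sq_div_two (s : ℝ) :
    Summable fun n : ℕ => ((n : ℝ) + 1) ^ s * rexp (-((n : ℝ) + 1) ^ 2 / 2) := by
  have h := (rpow_mul_exp_neg_mul_sq_isLittleO_exp_neg one_half_pos s).comp_tendsto
    tendsto_natCast_atTop_atTop
  have hexp : Summable ((fun x : ℝ => rexp (-(1 / 2) * x)) ∘ Nat.cast) := by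
    simpa only [Function.comp_def, mul_comm] using
      summable_exp_nat_mul_iff.mpr (neg_lt_zero.mpr one_half_pos)
  refine ((summable_nat_add_iff 1).mpr (summable_of_isBigO_nat hexp h.isBigO)).congr fun n => ?_
  simp only [Function.comp_apply, Nat.cast_add, Nat.cast_one]
  ring_nf

theorem lintegral_prod_mul_symm_kernel_le {α : Type*} [MeasurableSpace α] {μ : Measure α}
    [SFinite μ] {f : α → ℝ≥0∞} (hf : AEMeasurable f μ) {G : α → α → ℝ≥0∞}
    (hG : Measurable (Function.uncurry G)) (hGsymm : ∀ x y, G x y = G y x) {B : ℝ≥0∞}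
    (hB : ∀ x, ∫⁻ y, G x y ∂μ ≤ B) :
    ∫⁻ p, f p.1 * f p.2 * G p.1 p.2 ∂(μ.prod μ) ≤ B * ∫⁻ x, f x ^ 2 ∂μ := by
  have hf₁ : AEMeasurable (fun p : α × α => f p.1 ^ 2 * G p.1 p.2) (μ.prod μ) :=
    (hf.comp_fst.pow_const 2).mul hG.aemeasurable
  have hhalf : ∫⁻ p, f p.1 ^ 2 * G p.1 p.2 ∂(μ.prod μ) ≤ B * ∫⁻ x, f x ^ 2 ∂μ :=
    calc ∫⁻ p, f p.1 ^ 2 * G p.1 p.2 ∂(μ.prod μ)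
        = ∫⁻ x, f x ^ 2 * ∫⁻ y, G x y ∂μ ∂μ := by
          rw [lintegral_prod _ hf₁]
          exact lintegral_congr fun x => lintegral_const_mul (f x ^ 2) hG.of_uncurry_left
      _ ≤ ∫⁻ x, f x ^ 2 * B ∂μ := by gcongr with x; exact hB x
      _ = B * ∫⁻ x, f x ^ 2 ∂μ := by rw [lintegral_mul_const'' B (hf.pow_const 2), mul_comm]
  have hswap : ∫⁻ p, f p.2 ^ 2 * G p.1 p.2 ∂(μ.prod μ) =
      ∫⁻ p, f p.1 ^ 2 * G p.1 p.2 ∂(μ.prod μ) := by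
    rw [← lintegral_prod_swap]
    simp only [Prod.fst_swap, Prod.snd_swap, hGsymm]
  have htwo : 2 * ∫⁻ p, f p.1 * f p.2 * G p.1 p.2 ∂(μ.prod μ) ≤ 2 * (B * ∫⁻ x, f x ^ 2 ∂μ) :=
    calc 2 * ∫⁻ p, f p.1 * f p.2 * G p.1 p.2 ∂(μ.prod μ)
        = ∫⁻ p, 2 * f p.1 * f p.2 * G p.1 p.2 ∂(μ.prod μ) := by
          rw [← lintegral_const_mul' _ _ ENNReal.ofNat_ne_top]
          simp only [mul_assoc]
      _ ≤ ∫⁻ p, (f p.1 ^ 2 * G p.1 p.2 + f p.2 ^ 2 * G p.1 p.2) ∂(μ.prod μ) := by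
          gcongr with p
          rw [← add_mul]
          gcongr
          exact ENNReal.two_mul_le_add_sq _ _
      _ = 2 * ∫⁻ p, f p.1 ^ 2 * G p.1 p.2 ∂(μ.prod μ) := by
          rw [lintegral_add_left' hf₁, hswap, two_mul]
      _ ≤ 2 * (B * ∫⁻ x, f x ^ 2 ∂μ) := by gcongr
  exact (ENNReal.mul_le_mul_iff_right two_ne_zero ENNReal.ofNat_ne_top).mp htwo

theorem enorm_integral_ofReal_eq_lintegral {α : Type*} [MeasurableSpace α] {μ : Measure α}
    {h : α → ℝ} (hh : Integrable (fun x => (h x : ℂ)) μ) (h0 : ∀ x, 0 ≤ h x) :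
    ‖∫ x, (h x : ℂ) ∂μ‖ₑ = ∫⁻ x, ENNReal.ofReal (h x) ∂μ := by
  rw [integral_complex_ofReal, ← ofReal_norm, Complex.norm_real,
    Real.norm_of_nonneg (integral_nonneg h0),
    ofReal_integral_eq_lintegral_ofReal (by simpa using hh.re) (.of_forall h0)]

theorem setLIntegral_closedBall_le_exp_one_mul {V : Type*} [NormedAddCommGroup V]
    [MeasurableSpace V] [OpensMeasurableSpace V] {μ : Measure V} (g : V → ℝ≥0∞) (R : ℝ) :
    ∫⁻ ξ in closedBall 0 R, g ξ ∂μ ≤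
      ENNReal.ofReal (rexp 1) * ∫⁻ ξ, g ξ * ENNReal.ofReal (rexp (-(‖ξ‖ / R) ^ 2)) ∂μ := by
  calc ∫⁻ ξ in closedBall 0 R, g ξ ∂μ
      ≤ ∫⁻ ξ in closedBall 0 R,
          ENNReal.ofReal (rexp 1) * (g ξ * ENNReal.ofReal (rexp (-(‖ξ‖ / R) ^ 2))) ∂μ := by
        refine setLIntegral_mono' measurableSet_closedBall fun ξ hξ => ?_
        have hξR : ‖ξ‖ ≤ R := mem_closedBall_zero_iff.mp hξ
        have hR : 0 ≤ R := (norm_nonneg ξ).trans hξR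
        have hξR' : (‖ξ‖ / R) ^ 2 ≤ 1 :=
          pow_le_one₀ (div_nonneg (norm_nonneg ξ) hR) (div_le_one_of_le₀ hξR hR)
        have hone : 1 ≤ ENNReal.ofReal (rexp 1) * ENNReal.ofReal (rexp (-(‖ξ‖ / R) ^ 2)) := by
          rw [← ENNReal.ofReal_mul (exp_pos 1).le, ← Real.exp_add, ENNReal.one_le_ofReal]
          exact one_le_exp (by linarith)
        calc g ξ = g ξ * 1 := (mul_one _).symm
          _ ≤ g ξ * (ENNReal.ofReal (rexp 1) * ENNReal.ofReal (rexp (-(‖ξ‖ / R) ^ 2))) := by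
            gcongr
          _ = _ := by ring
    _ ≤ ∫⁻ ξ, ENNReal.ofReal (rexp 1) * (g ξ * ENNReal.ofReal (rexp (-(‖ξ‖ / R) ^ 2))) ∂μ :=
        setLIntegral_le_lintegral _ _
    _ = _ := lintegral_const_mul' _ _ ENNReal.ofReal_ne_top

theorem eLpNorm_two_sq {α F : Type*} [MeasurableSpace α] [NormedAddCommGroup F] {μ : Measure α}
    (f : α → F) :
    eLpNorm f 2 μ ^ 2 = ∫⁻ x, ‖f x‖ₑ ^ 2 ∂μ := by
  simpa using eLpNorm_nnreal_pow_eq_lintegral (f := f) (μ := μ) (p := 2) two_ne_zero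

theorem two_pow_succ_rpow_le (j : ℕ) (t : ℝ) {η : ℝ} (hη : 0 ≤ η) :
    ((2 : ℝ) ^ (j + 1)) ^ t ≤ 2 ^ t * 2 ^ ((j : ℝ) * (t + η)) := by
  rw [← rpow_natCast, ← rpow_mul zero_le_two, ← rpow_add zero_lt_two]
  refine rpow_le_rpow_of_exponent_le one_le_two ?_
  push_cast
  nlinarith [(j.cast_nonneg : (0 : ℝ) ≤ j)]

theorem exp_neg_sq_le_exp_one_mul {t : ℝ} {n : ℕ} (h : (n : ℝ) ≤ t) :
    rexp (-t ^ 2) ≤ rexp 1 * rexp (-((n : ℝ) + 1) ^ 2 / 2) := by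
  rw [← Real.exp_add, exp_le_exp]
  nlinarith [sq_nonneg ((n : ℝ) - 1), (n.cast_nonneg : (0 : ℝ) ≤ n)]

section
variable {d : ℕ}
local notation "E" => EuclideanSpace ℝ (Fin d)

theorem HasCompactSupportM.isFiniteMeasure {ν : Measure E} (hν : HasCompactSupportM ν)
    {s C : ℝ} (hF : IsFrostman ν s C) : IsFiniteMeasure ν := by
  obtain ⟨K, hK, hK0⟩ := hν
  obtain ⟨r, hr, hKr⟩ := hK.isBounded.subset_closedBall_lt 0 0
  refine ⟨?_⟩
  calc ν univ = ν K := (measure_of_measure_compl_eq_zero hK0).symm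
    _ ≤ ν (closedBall 0 r) := measure_mono hKr
    _ ≤ ENNReal.ofReal (C * r ^ s) := hF 0 r hr
    _ < ⊤ := ENNReal.ofReal_lt_top

theorem IsFrostman.exists_lintegral_exp_neg_sq_le {ν : Measure E} {s C : ℝ}
    (hF : IsFrostman ν s C) (hC : 0 < C) :
    ∃ M > 0, ∀ a > 0, ∀ x : E,
      ∫⁻ y, ENNReal.ofReal (rexp (-(a * ‖x - y‖) ^ 2)) ∂ν ≤ ENNReal.ofReal (M * a ^ (-s)) := by
  set g : ℕ → ℝ := fun n => ((n : ℝ) + 1) ^ s * rexp (-((n : ℝ) + 1) ^ 2 / 2)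
  have hg : Summable g := summable_add_one_rpow_mul_exp_neg_sq_div_two s
  have hg0 : ∀ n, 0 < g n := fun n => by positivity
  have hgsum : 0 < ∑' n, g n := hg.tsum_pos (fun n => (hg0 n).le) 0 (hg0 0)
  refine ⟨rexp 1 * C * ∑' n, g n, by positivity, ?_⟩
  intro a ha x
  have hshell : ∀ y, ENNReal.ofReal (rexp (-(a * ‖x - y‖) ^ 2)) ≤
      ∑' n : ℕ, (closedBall x (((n : ℝ) + 1) / a)).indicator
        (fun _ => ENNReal.ofReal (rexp 1 * rexp (-((n : ℝ) + 1) ^ 2 / 2))) y := by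
    intro y
    set n := ⌊a * ‖x - y‖⌋₊
    refine le_trans ?_ (ENNReal.le_tsum n)
    have hy : y ∈ closedBall x (((n : ℝ) + 1) / a) := by
      rw [mem_closedBall, dist_comm, dist_eq_norm, le_div_iff₀ ha, mul_comm]
      exact (Nat.lt_floor_add_one _).le
    rw [indicator_of_mem hy]
    exact ENNReal.ofReal_le_ofReal (exp_neg_sq_le_exp_one_mul (Nat.floor_le (by positivity)))
  calc ∫⁻ y, ENNReal.ofReal (rexp (-(a * ‖x - y‖) ^ 2)) ∂ν
      ≤ ∑' n : ℕ, ∫⁻ y, (closedBall x (((n : ℝ) + 1) / a)).indicator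
          (fun _ => ENNReal.ofReal (rexp 1 * rexp (-((n : ℝ) + 1) ^ 2 / 2))) y ∂ν := by
        rw [← lintegral_tsum fun n =>
          (measurable_const.indicator measurableSet_closedBall).aemeasurable]
        exact lintegral_mono hshell
    _ ≤ ∑' n : ℕ, ENNReal.ofReal (rexp 1 * C * a ^ (-s) * g n) := by
        refine ENNReal.tsum_le_tsum fun n => ?_
        rw [lintegral_indicator_const measurableSet_closedBall]
        calc _ ≤ ENNReal.ofReal (rexp 1 * rexp (-((n : ℝ) + 1) ^ 2 / 2)) *
              ENNReal.ofReal (C * (((n : ℝ) + 1) / a) ^ s) := by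
              gcongr
              exact hF x _ (by positivity)
          _ = _ := by
              rw [← ENNReal.ofReal_mul (by positivity), div_rpow (by positivity) ha.le,
                rpow_neg ha.le]
              congr 1
              ring
    _ = ENNReal.ofReal ((rexp 1 * C * ∑' n, g n) * a ^ (-s)) := by
        rw [← ENNReal.ofReal_tsum_of_nonneg (fun n => by positivity)
          ((hg.mul_left (rexp 1 * C * a ^ (-s)))), tsum_mul_left]
        ring_nf

theorem fourierKernel_mul_conj (x y ξ : E) :
    cexp (↑(-(2 * π * inner ℝ x ξ)) * I) * conj (cexp (↑(-(2 * π * inner ℝ y ξ)) * I)) =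
      cexp (↑(-2 * π * inner ℝ ξ (x - y)) * I) := by
  rw [← Complex.exp_conj, ← Complex.exp_add, inner_sub_right, real_inner_comm x, real_inner_comm y]
  congr 1
  simp only [map_mul, conj_ofReal, conj_I]
  push_cast
  ring

theorem fourierM_mul_conj (ν : Measure E) [SFinite ν] (f : E → ℂ) (ξ : E) :
    fourierM ν f ξ * conj (fourierM ν f ξ) =
      ∫ p, cexp (↑(-2 * π * inner ℝ ξ (p.1 - p.2)) * I) * (f p.1 * conj (f p.2)) ∂(ν.prod ν) := by
  rw [fourierM, ← integral_conj, ← integral_prod_mul]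
  congr 1 with p
  rw [← fourierKernel_mul_conj, map_mul]
  ring


theorem ofReal_exp_neg_div_sq (R : ℝ) (v : E) :
    ((rexp (-(‖v‖ / R) ^ 2) : ℝ) : ℂ) = cexp (-(((R ^ 2)⁻¹ : ℝ) : ℂ) * ‖v‖ ^ 2) := by
  rw [ofReal_exp]
  congr 1
  push_cast
  ring

theorem integrable_ofReal_exp_neg_div_sq {R : ℝ} (hR : 0 < R) :
    Integrable fun ξ : E => ((rexp (-(‖ξ‖ / R) ^ 2) : ℝ) : ℂ) := by
  rw [funext (ofReal_exp_neg_div_sq R (d := d))]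
  have hb : 0 < ((((R ^ 2)⁻¹ : ℝ) : ℂ)).re := by simp only [ofReal_re]; positivity
  simpa using GaussianFourier.integrable_cexp_neg_mul_sq_norm_add hb 0 (0 : E)

theorem integral_fourierKernel_mul_gaussian {R : ℝ} (hR : 0 < R) (v : E) :
    ∫ ξ, cexp (↑(-2 * π * inner ℝ ξ v) * I) * ((rexp (-(‖ξ‖ / R) ^ 2) : ℝ) : ℂ) =
      (((π * R ^ 2) ^ ((d : ℝ) / 2) * rexp (-(π * R * ‖v‖) ^ 2) : ℝ) : ℂ) := by
  have hb : 0 < ((((R ^ 2)⁻¹ : ℝ) : ℂ)).re := by simp only [ofReal_re]; positivity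
  have h := fourier_gaussian_innerProductSpace hb v
  simp only [fourier_eq', finrank_euclideanSpace_fin, smul_eq_mul] at h
  simp only [ofReal_exp_neg_div_sq R, h]
  rw [ofReal_mul, ofReal_cpow (by positivity), ofReal_exp]
  push_cast
  congr 2
  · field_simp
  · field_simp

theorem lintegral_enorm_fourierM_sq_mul_gaussian_le {ν : Measure E} [IsFiniteMeasure ν]
    {f : E → ℂ} (hf : Integrable f ν) {R : ℝ} (hR : 0 < R) :
    ∫⁻ ξ, ‖fourierM ν f ξ‖ₑ ^ 2 * ENNReal.ofReal (rexp (-(‖ξ‖ / R) ^ 2)) ≤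
      ENNReal.ofReal ((π * R ^ 2) ^ ((d : ℝ) / 2)) *
        ∫⁻ p, ‖f p.1‖ₑ * ‖f p.2‖ₑ * ENNReal.ofReal (rexp (-(π * R * ‖p.1 - p.2‖) ^ 2))
          ∂(ν.prod ν) := by
  set Φ : E → E × E → ℂ := fun ξ p => cexp (↑(-2 * π * inner ℝ ξ (p.1 - p.2)) * I) *
    ((rexp (-(‖ξ‖ / R) ^ 2) : ℝ) : ℂ) * (f p.1 * conj (f p.2))
  have hΦ : Integrable (Function.uncurry Φ) (volume.prod (ν.prod ν)) := by
    refine ((integrable_ofReal_exp_neg_div_sq hR).norm.mul_prod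
      (hf.norm.mul_prod hf.norm)).mono' ?_ (.of_forall fun q => ?_)
    · refine (Continuous.aestronglyMeasurable ?_).mul
        (hf.1.comp_fst.mul (continuous_conj.comp_aestronglyMeasurable hf.1.comp_snd)).comp_snd
      fun_prop
    · simp only [Function.uncurry, Φ, norm_mul, norm_exp_ofReal_mul_I, RCLike.norm_conj, one_mul,
        le_refl]
  have hΦ_fourierM : ∀ ξ, ((‖fourierM ν f ξ‖ ^ 2 * rexp (-(‖ξ‖ / R) ^ 2) : ℝ) : ℂ) =
      ∫ p, Φ ξ p ∂(ν.prod ν) := fun ξ => by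
    rw [ofReal_mul, ofReal_pow, ← Complex.mul_conj', fourierM_mul_conj, ← integral_mul_const]
    congr 1 with p
    ring
  have hΦ_gaussian : ∀ p : E × E, ∫ ξ, Φ ξ p =
      (((π * R ^ 2) ^ ((d : ℝ) / 2) * rexp (-(π * R * ‖p.1 - p.2‖) ^ 2) : ℝ) : ℂ) *
        (f p.1 * conj (f p.2)) := fun p => by
    simp only [Φ, integral_mul_const, integral_fourierKernel_mul_gaussian hR]
  have henorm : ∀ r : ℝ, 0 ≤ r → ‖(r : ℂ)‖ₑ = ENNReal.ofReal r := fun r hr => by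
    rw [← ofReal_norm, norm_real, Real.norm_of_nonneg hr]
  calc ∫⁻ ξ, ‖fourierM ν f ξ‖ₑ ^ 2 * ENNReal.ofReal (rexp (-(‖ξ‖ / R) ^ 2))
      = ∫⁻ ξ, ENNReal.ofReal (‖fourierM ν f ξ‖ ^ 2 * rexp (-(‖ξ‖ / R) ^ 2)) := by
        refine lintegral_congr fun ξ => ?_
        rw [ENNReal.ofReal_mul (by positivity), ENNReal.ofReal_pow (norm_nonneg _), ofReal_norm]
    _ = ‖∫ ξ, ∫ p, Φ ξ p ∂(ν.prod ν)‖ₑ := by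
        simp only [← hΦ_fourierM]
        refine (enorm_integral_ofReal_eq_lintegral ?_ fun ξ => by positivity).symm
        exact hΦ.integral_prod_left.congr (.of_forall fun ξ => (hΦ_fourierM ξ).symm)
    _ = ‖∫ p, (∫ ξ, Φ ξ p) ∂(ν.prod ν)‖ₑ := by rw [integral_integral_swap hΦ]
    _ ≤ ∫⁻ p, ‖∫ ξ, Φ ξ p‖ₑ ∂(ν.prod ν) := enorm_integral_le_lintegral_enorm _
    _ = _ := by
        rw [← lintegral_const_mul' _ _ ENNReal.ofReal_ne_top]
        refine lintegral_congr fun p => ?_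
        rw [hΦ_gaussian, enorm_mul, enorm_mul, henorm _ (by positivity), RCLike.enorm_conj,
          ENNReal.ofReal_mul (by positivity)]
        ring

theorem IsFrostman.exists_setLIntegral_closedBall_enorm_fourierM_sq_le {ν : Measure E}
    [IsFiniteMeasure ν] {s C : ℝ} (hF : IsFrostman ν s C) (hC : 0 < C) :
    ∃ K > 0, ∀ R > 0, ∀ f : E → ℂ, MemLp f 2 ν →
      ∫⁻ ξ in closedBall 0 R, ‖fourierM ν f ξ‖ₑ ^ 2 ≤
        ENNReal.ofReal (K * R ^ ((d : ℝ) - s)) * eLpNorm f 2 ν ^ 2 := by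
  obtain ⟨M, hM, hgauss⟩ := hF.exists_lintegral_exp_neg_sq_le hC
  refine ⟨rexp 1 * π ^ ((d : ℝ) / 2) * M * π ^ (-s), by positivity, fun R hR f hf => ?_⟩
  set G : E → E → ℝ≥0∞ := fun x y => ENNReal.ofReal (rexp (-(π * R * ‖x - y‖) ^ 2))
  have hG : Measurable (Function.uncurry G) :=
    ENNReal.measurable_ofReal.comp (by fun_prop : Continuous fun p : E × E =>
      rexp (-(π * R * ‖p.1 - p.2‖) ^ 2)).measurable
  have hGsymm : ∀ x y, G x y = G y x := fun x y => by simp only [G, norm_sub_rev]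
  have hπR : 0 < π * R := by positivity
  have hpow : rexp 1 * (π * R ^ 2) ^ ((d : ℝ) / 2) * (M * (π * R) ^ (-s)) =
      rexp 1 * π ^ ((d : ℝ) / 2) * M * π ^ (-s) * R ^ ((d : ℝ) - s) := by
    rw [mul_rpow pi_pos.le (by positivity), mul_rpow pi_pos.le hR.le, ← rpow_natCast R 2,
      ← rpow_mul hR.le, sub_eq_add_neg, rpow_add hR,
      show ((2 : ℕ) : ℝ) * ((d : ℝ) / 2) = d by push_cast; ring]
    ring
  calc ∫⁻ ξ in closedBall 0 R, ‖fourierM ν f ξ‖ₑ ^ 2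
      ≤ ENNReal.ofReal (rexp 1) *
          ∫⁻ ξ, ‖fourierM ν f ξ‖ₑ ^ 2 * ENNReal.ofReal (rexp (-(‖ξ‖ / R) ^ 2)) :=
        setLIntegral_closedBall_le_exp_one_mul _ R
    _ ≤ ENNReal.ofReal (rexp 1) * (ENNReal.ofReal ((π * R ^ 2) ^ ((d : ℝ) / 2)) *
          ∫⁻ p, ‖f p.1‖ₑ * ‖f p.2‖ₑ * G p.1 p.2 ∂(ν.prod ν)) := by
        gcongr
        exact lintegral_enorm_fourierM_sq_mul_gaussian_le (hf.integrable one_le_two) hR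
    _ ≤ ENNReal.ofReal (rexp 1) * (ENNReal.ofReal ((π * R ^ 2) ^ ((d : ℝ) / 2)) *
          (ENNReal.ofReal (M * (π * R) ^ (-s)) * ∫⁻ x, ‖f x‖ₑ ^ 2 ∂ν)) := by
        gcongr
        exact lintegral_prod_mul_symm_kernel_le hf.1.enorm hG hGsymm (hgauss _ hπR)
    _ = _ := by
        rw [eLpNorm_two_sq, ← mul_assoc, ← mul_assoc, ← ENNReal.ofReal_mul (exp_pos 1).le,
          ← ENNReal.ofReal_mul (by positivity), hpow]

end

theorem stmt_6_general (d : ℕ) (sν : ℝ)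
    (ν : Measure (EuclideanSpace ℝ (Fin d))) (hνc : HasCompactSupportM ν)
    (hνF : ∃ C : ℝ, 0 < C ∧ IsFrostman ν sν C) :
    ∀ η : ℝ, 0 < η → ∃ C : ℝ, 0 < C ∧ ∀ (j : ℕ) (f : EuclideanSpace ℝ (Fin d) → ℂ),
      MemLp f 2 ν →
      ∫⁻ ξ in {ξ : EuclideanSpace ℝ (Fin d) | (2 : ℝ) ^ j ≤ ‖ξ‖ ∧ ‖ξ‖ ≤ 2 ^ (j + 1)},
          (‖fourierM ν f ξ‖₊ : ℝ≥0∞) ^ 2 ≤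
        ENNReal.ofReal C * (2 : ℝ≥0∞) ^ ((j : ℝ) * ((d : ℝ) - sν + η)) * eLpNorm f 2 ν ^ 2 := by
  intro η hη
  obtain ⟨C, hC, hF⟩ := hνF
  have := hνc.isFiniteMeasure hF
  obtain ⟨K, hK, hball⟩ := hF.exists_setLIntegral_closedBall_enorm_fourierM_sq_le hC
  refine ⟨K * 2 ^ ((d : ℝ) - sν), by positivity, fun j f hf => ?_⟩
  calc ∫⁻ ξ in {ξ : EuclideanSpace ℝ (Fin d) | (2 : ℝ) ^ j ≤ ‖ξ‖ ∧ ‖ξ‖ ≤ 2 ^ (j + 1)},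
        ‖fourierM ν f ξ‖ₑ ^ 2
      ≤ ∫⁻ ξ in closedBall 0 (2 ^ (j + 1)), ‖fourierM ν f ξ‖ₑ ^ 2 :=
        lintegral_mono_set fun ξ hξ => mem_closedBall_zero_iff.mpr hξ.2
    _ ≤ ENNReal.ofReal (K * ((2 : ℝ) ^ (j + 1)) ^ ((d : ℝ) - sν)) * eLpNorm f 2 ν ^ 2 :=
        hball _ (by positivity) f hf
    _ ≤ _ := by
        have h2 : (2 : ℝ≥0∞) ^ ((j : ℝ) * ((d : ℝ) - sν + η)) =
            ENNReal.ofReal (2 ^ ((j : ℝ) * ((d : ℝ) - sν + η))) := by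
          rw [← ENNReal.ofReal_rpow_of_pos two_pos, ENNReal.ofReal_ofNat]
        rw [h2, ← ENNReal.ofReal_mul (by positivity), mul_assoc K]
        gcongr
        exact two_pow_succ_rpow_le j _ hη.le

/-- the dyadic-annulus Fourier energy estimate
`∫_{2^j ≤ |ξ| ≤ 2^{j+1}} |𝔽(fν)(ξ)|² dξ ≤ C 2^{j(d - s_ν + η)} ‖f‖²_{L²(ν)}`. -/
theorem stmt_6 (d : ℕ) (hd : 1 ≤ d) (sν : ℝ) (hsν0 : 0 < sν) (hsνd : sν ≤ d)
    (ν : Measure (EuclideanSpace ℝ (Fin d))) (hνc : HasCompactSupportM ν)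
    (hνF : ∃ C : ℝ, 0 < C ∧ IsFrostman ν sν C) :
    ∀ η : ℝ, 0 < η → ∃ C : ℝ, 0 < C ∧ ∀ (j : ℕ) (f : EuclideanSpace ℝ (Fin d) → ℂ),
      MemLp f 2 ν →
      ∫⁻ ξ in {ξ : EuclideanSpace ℝ (Fin d) | (2 : ℝ) ^ j ≤ ‖ξ‖ ∧ ‖ξ‖ ≤ 2 ^ (j + 1)},
          (‖fourierM ν f ξ‖₊ : ℝ≥0∞) ^ 2 ≤
        ENNReal.ofReal C * (2 : ℝ≥0∞) ^ ((j : ℝ) * ((d : ℝ) - sν + η)) * eLpNorm f 2 ν ^ 2 :=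
  stmt_6_general d sν ν hνc hνF
end
end

section
/- Let d ≥ 1, 0 < s_ν ≤ d, and let ν be a compactly supported Borel measure on ℝ^d satisfying the s_ν-dimensional Frostman condition. Let β ∈ C_c^∞(ℝ^d) be supported in the annulus {ξ : 1/2 ≤ |ξ| ≤ 4}, and for g ∈ L¹(ν) and j ≥ 0 define the Littlewood–Paley piece P_j(gν)(x) = ∫_{ℝ^d} e^{2πi x·ξ} β(2^{-j}ξ) 𝔽(gν)(ξ) dξ. Then for every η > 0 and every exponent 1 ≤ p ≤ ∞ with conjugate exponent p' = p/(p−1), there exists a constant C > 0 such that for every integer j ≥ 0 and every g ∈ L^{p'}(ν), ‖P_j(gν)‖_{L^{p'}(ℝ^d, dx)} ≤ C · 2^{j(d − s_ν + η)/p} ‖g‖_{L^{p'}(ν)}. -/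
open MeasureTheory Metric Filter Set
open scoped ENNReal NNReal Topology

noncomputable section

def myToSchwartz {d : ℕ} (β : EuclideanSpace ℝ (Fin d) → ℝ)
    (hs : ContDiff ℝ (⊤ : ℕ∞) β) (hc : HasCompactSupport β) :
    SchwartzMap (EuclideanSpace ℝ (Fin d)) ℂ where
  toFun x := (β x : ℂ)
  smooth' := Complex.ofRealCLM.contDiff.comp (hs.of_le (by simp))
  decay' := by
    intro k n
    have hc' : HasCompactSupport (fun x : EuclideanSpace ℝ (Fin d) => (β x : ℂ)) :=
      hc.comp_left (g := fun r : ℝ => (r : ℂ)) (by simp)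
    have hsm : ContDiff ℝ (⊤ : ℕ∞) (fun x : EuclideanSpace ℝ (Fin d) => (β x : ℂ)) :=
      Complex.ofRealCLM.contDiff.comp hs
    have hcont : Continuous fun x : EuclideanSpace ℝ (Fin d) =>
        ‖x‖ ^ k * ‖iteratedFDeriv ℝ n (fun x => (β x : ℂ)) x‖ :=
      (continuous_norm.pow k).mul
        (((hsm.of_le le_rfl).continuous_iteratedFDeriv (m := n) (by exact_mod_cast (le_top : (n : ℕ∞) ≤ ⊤))).norm)
    have hcs : HasCompactSupport fun x : EuclideanSpace ℝ (Fin d) =>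
        ‖x‖ ^ k * ‖iteratedFDeriv ℝ n (fun x => (β x : ℂ)) x‖ :=
      HasCompactSupport.mul_left ((hc'.iteratedFDeriv n).norm)
    obtain ⟨C, hC⟩ := hcont.bounded_above_of_compact_support hcs
    exact ⟨C, fun x => by simpa [abs_of_nonneg (by positivity :
      (0:ℝ) ≤ ‖x‖ ^ k * ‖iteratedFDeriv ℝ n (fun x => (β x : ℂ)) x‖)] using hC x⟩

theorem schwartz_decay_bound {d : ℕ} (φ : SchwartzMap (EuclideanSpace ℝ (Fin d)) ℂ) :
    ∃ C : ℝ, 0 < C ∧ ∀ v : EuclideanSpace ℝ (Fin d),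
      ‖φ v‖ ≤ C * ((1 + ‖v‖) ^ (d + 1))⁻¹ := by
  obtain ⟨C₀, hC₀pos, hC₀⟩ := φ.decay 0 0
  obtain ⟨C₁, hC₁pos, hC₁⟩ := φ.decay (d + 1) 0
  refine ⟨2 ^ (d + 1) * (C₀ + C₁), by positivity, fun v => ?_⟩
  have h0 : ‖φ v‖ ≤ C₀ := by simpa [norm_iteratedFDeriv_zero] using hC₀ v
  have h1 : ‖v‖ ^ (d + 1) * ‖φ v‖ ≤ C₁ := by
    simpa [norm_iteratedFDeriv_zero] using hC₁ v
  have hv : (0:ℝ) ≤ ‖v‖ := norm_nonneg _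
  have hkey : (1 + ‖v‖) ^ (d + 1) * ‖φ v‖ ≤ 2 ^ (d + 1) * (C₀ + C₁) := by
    have h2 : (1 + ‖v‖) ^ (d + 1) ≤ 2 ^ (d + 1) * (1 + ‖v‖ ^ (d + 1)) := by
      calc (1 + ‖v‖) ^ (d + 1) ≤ (2 * max 1 ‖v‖) ^ (d + 1) := by
            apply pow_le_pow_left₀ (by positivity)
            calc 1 + ‖v‖ ≤ max 1 ‖v‖ + max 1 ‖v‖ :=
                  add_le_add (le_max_left _ _) (le_max_right _ _)
              _ = 2 * max 1 ‖v‖ := by ring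
        _ = 2 ^ (d + 1) * (max 1 ‖v‖) ^ (d + 1) := by rw [mul_pow]
        _ ≤ 2 ^ (d + 1) * (1 + ‖v‖ ^ (d + 1)) := by
            apply mul_le_mul_of_nonneg_left ?_ (by positivity)
            rcases le_total ‖v‖ 1 with h | h
            · rw [max_eq_left h]; rw [one_pow]
              nlinarith [pow_nonneg hv (d+1)]
            · rw [max_eq_right h]; linarith
    calc (1 + ‖v‖) ^ (d + 1) * ‖φ v‖ ≤ 2 ^ (d + 1) * (1 + ‖v‖ ^ (d + 1)) * ‖φ v‖ := by
          gcongr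
      _ = 2 ^ (d + 1) * (‖φ v‖ + ‖v‖ ^ (d + 1) * ‖φ v‖) := by ring
      _ ≤ 2 ^ (d + 1) * (C₀ + C₁) := by gcongr
  have hp : (0:ℝ) < (1 + ‖v‖) ^ (d + 1) := by positivity
  have := (le_div_iff₀ hp).2 (by linarith : ‖φ v‖ * (1 + ‖v‖) ^ (d + 1) ≤ 2 ^ (d + 1) * (C₀ + C₁))
  simpa [div_eq_mul_inv] using this

theorem kernel_eq {d : ℕ} (φ : SchwartzMap (EuclideanSpace ℝ (Fin d)) ℂ)
    (j : ℕ) (w : EuclideanSpace ℝ (Fin d)) :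
    (∫ ξ : EuclideanSpace ℝ (Fin d),
        Complex.exp (((2 * Real.pi * (inner ℝ w ξ : ℝ)) : ℝ) * Complex.I) *
          φ ((2 : ℝ) ^ (-(j : ℝ)) • ξ)) =
      ((2 : ℝ) ^ ((j : ℝ) * d)) •
        (SchwartzMap.fourierTransformCLM ℂ φ) (-((2 : ℝ) ^ ((j : ℝ)) • w)) := by
  have h2 : (0:ℝ) < 2 := two_pos
  set c : ℝ := (2 : ℝ) ^ (-(j : ℝ)) with hc
  set t : ℝ := (2 : ℝ) ^ ((j : ℝ)) with ht
  have htc : t * c = 1 := by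
    rw [hc, ht, ← Real.rpow_add h2]; simp
  set F : EuclideanSpace ℝ (Fin d) → ℂ := fun u =>
    Complex.exp (((2 * Real.pi * (inner ℝ w (t • u) : ℝ)) : ℝ) * Complex.I) * φ u with hF
  have hcomp : ∀ ξ, F (c • ξ) =
      Complex.exp (((2 * Real.pi * (inner ℝ w ξ : ℝ)) : ℝ) * Complex.I) * φ (c • ξ) := by
    intro ξ
    rw [hF]
    simp only [smul_smul, htc, one_smul]
  have key := MeasureTheory.Measure.integral_comp_smul (volume : Measure (EuclideanSpace ℝ (Fin d))) F c
  rw [show (∫ ξ : EuclideanSpace ℝ (Fin d),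
        Complex.exp (((2 * Real.pi * (inner ℝ w ξ : ℝ)) : ℝ) * Complex.I) * φ (c • ξ))
      = ∫ ξ, F (c • ξ) from by simp_rw [hcomp], key]
  have hfr : Module.finrank ℝ (EuclideanSpace ℝ (Fin d)) = d := finrank_euclideanSpace_fin
  have habs : |(c ^ Module.finrank ℝ (EuclideanSpace ℝ (Fin d)))⁻¹| = (2:ℝ) ^ ((j:ℝ) * d) := by
    rw [hfr, hc, ← Real.rpow_natCast ((2:ℝ) ^ (-(j:ℝ))) d, ← Real.rpow_mul (le_of_lt h2),
      ← Real.rpow_neg_one, ← Real.rpow_mul (le_of_lt h2)]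
    rw [abs_of_pos (Real.rpow_pos_of_pos h2 _)]
    ring_nf
  rw [habs]
  congr 1
  rw [SchwartzMap.fourierTransformCLM_apply, SchwartzMap.fourier_coe, Real.fourier_eq]
  apply MeasureTheory.integral_congr_ae
  filter_upwards with u
  show Complex.exp (((2 * Real.pi * (inner ℝ w (t • u) : ℝ)) : ℝ) * Complex.I) * φ u = _
  have hinner : (inner ℝ w (t • u) : ℝ) = (inner ℝ (t • w) u : ℝ) := by
    rw [real_inner_smul_right, real_inner_smul_left]
  rw [hinner]
  have : -(inner ℝ u (-(t • w)) : ℝ) = (inner ℝ (t • w) u : ℝ) := by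
    rw [inner_neg_right, neg_neg, real_inner_comm]
  rw [this]
  rw [Circle.smul_def, Real.fourierChar_apply]
  rw [smul_eq_mul]

theorem fubini_step {d : ℕ} (ν : Measure (EuclideanSpace ℝ (Fin d))) [IsFiniteMeasure ν]
    (βj : EuclideanSpace ℝ (Fin d) → ℝ) (hβjc : Continuous βj) (hβjs : HasCompactSupport βj)
    (g : EuclideanSpace ℝ (Fin d) → ℂ) (hg : Integrable g ν) (x : EuclideanSpace ℝ (Fin d)) :
    (∫ ξ : EuclideanSpace ℝ (Fin d),
        Complex.exp (((2 * Real.pi * (inner ℝ x ξ : ℝ)) : ℝ) * Complex.I) * (βj ξ : ℂ) *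
          (∫ y, Complex.exp ((-(2 * Real.pi * (inner ℝ y ξ : ℝ)) : ℝ) * Complex.I) * g y ∂ν)) =
      ∫ y, (∫ ξ : EuclideanSpace ℝ (Fin d),
          Complex.exp (((2 * Real.pi * (inner ℝ (x - y) ξ : ℝ)) : ℝ) * Complex.I) * (βj ξ : ℂ)) *
        g y ∂ν := by
  set H : EuclideanSpace ℝ (Fin d) → EuclideanSpace ℝ (Fin d) → ℂ := fun ξ y =>
    Complex.exp (((2 * Real.pi * (inner ℝ x ξ : ℝ)) : ℝ) * Complex.I) * (βj ξ : ℂ) *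
      (Complex.exp ((-(2 * Real.pi * (inner ℝ y ξ : ℝ)) : ℝ) * Complex.I) * g y) with hH
  have hβint : Integrable (fun ξ : EuclideanSpace ℝ (Fin d) => (βj ξ : ℂ)) volume :=
    (Complex.continuous_ofReal.comp hβjc).integrable_of_hasCompactSupport
      (hβjs.comp_left (by simp))
  have hprod : Integrable (fun z : EuclideanSpace ℝ (Fin d) × EuclideanSpace ℝ (Fin d) =>
      (βj z.1 : ℂ) * g z.2) (volume.prod ν) := hβint.mul_prod hg
  have hcont1 : Continuous (fun z : EuclideanSpace ℝ (Fin d) × EuclideanSpace ℝ (Fin d) =>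
      Complex.exp (((2 * Real.pi * (inner ℝ x z.1 : ℝ)) : ℝ) * Complex.I) * (βj z.1 : ℂ) *
        Complex.exp ((-(2 * Real.pi * (inner ℝ z.2 z.1 : ℝ)) : ℝ) * Complex.I)) := by
    have hi1 : Continuous fun z : EuclideanSpace ℝ (Fin d) × EuclideanSpace ℝ (Fin d) =>
        (inner ℝ x z.1 : ℝ) := Continuous.inner continuous_const continuous_fst
    have hi2 : Continuous fun z : EuclideanSpace ℝ (Fin d) × EuclideanSpace ℝ (Fin d) =>
        (inner ℝ z.2 z.1 : ℝ) := Continuous.inner continuous_snd continuous_fst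
    fun_prop
  have hHmeas : AEStronglyMeasurable (Function.uncurry H) (volume.prod ν) := by
    have heq : Function.uncurry H = fun z =>
        (Complex.exp (((2 * Real.pi * (inner ℝ x z.1 : ℝ)) : ℝ) * Complex.I) * (βj z.1 : ℂ) *
          Complex.exp ((-(2 * Real.pi * (inner ℝ z.2 z.1 : ℝ)) : ℝ) * Complex.I)) * g z.2 := by
      funext z
      simp only [Function.uncurry, hH]
      ring
    rw [heq]
    exact hcont1.aestronglyMeasurable.mul hg.1.comp_snd
  have hHint : Integrable (Function.uncurry H) (volume.prod ν) := by
    refine hprod.norm.mono' hHmeas ?_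
    filter_upwards with z
    simp only [Function.uncurry, hH]
    simp only [norm_mul, Complex.norm_exp_ofReal_mul_I, one_mul, mul_one,
      Complex.norm_real]
    exact le_refl _
  calc (∫ ξ : EuclideanSpace ℝ (Fin d),
        Complex.exp (((2 * Real.pi * (inner ℝ x ξ : ℝ)) : ℝ) * Complex.I) * (βj ξ : ℂ) *
          (∫ y, Complex.exp ((-(2 * Real.pi * (inner ℝ y ξ : ℝ)) : ℝ) * Complex.I) * g y ∂ν))
      = ∫ ξ, ∫ y, H ξ y ∂ν := by
        apply integral_congr_ae; filter_upwards with ξ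
        rw [hH, ← integral_const_mul]
    _ = ∫ y, (∫ ξ, H ξ y) ∂ν := integral_integral_swap hHint
    _ = ∫ y, (∫ ξ : EuclideanSpace ℝ (Fin d),
          Complex.exp (((2 * Real.pi * (inner ℝ (x - y) ξ : ℝ)) : ℝ) * Complex.I) * (βj ξ : ℂ)) *
        g y ∂ν := by
        apply integral_congr_ae; filter_upwards with y
        rw [← integral_mul_const]
        apply integral_congr_ae; filter_upwards with ξ
        rw [hH]
        have : ((2 * Real.pi * (inner ℝ (x - y) ξ : ℝ) : ℝ) : ℂ) * Complex.I =
            ((2 * Real.pi * (inner ℝ x ξ : ℝ) : ℝ) : ℂ) * Complex.I +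
            ((-(2 * Real.pi * (inner ℝ y ξ : ℝ)) : ℝ) : ℂ) * Complex.I := by
          rw [inner_sub_left]
          push_cast
          ring
        rw [this, Complex.exp_add]
        ring

theorem frostman_decay_sum {d : ℕ} (sν CF : ℝ) (hs0 : 0 < sν) (hsd : sν ≤ d) (hCF : 0 < CF)
    (ν : Measure (EuclideanSpace ℝ (Fin d)))
    (hF : ∀ (x : EuclideanSpace ℝ (Fin d)) (r : ℝ), 0 < r →
      ν (Metric.closedBall x r) ≤ ENNReal.ofReal (CF * r ^ sν))
    (x : EuclideanSpace ℝ (Fin d)) (j : ℕ) :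
    ∫⁻ y, ENNReal.ofReal (((1 + (2:ℝ)^((j:ℝ)) * ‖x - y‖) ^ (d+1))⁻¹) ∂ν
      ≤ 2 * ENNReal.ofReal (CF * (2:ℝ)^((d:ℝ))) * ENNReal.ofReal ((2:ℝ)^(-(j:ℝ) * sν)) := by
  have h2 : (0:ℝ) < 2 := two_pos
  -- the dyadic majorant
  have claim : ∀ y : EuclideanSpace ℝ (Fin d),
      ENNReal.ofReal (((1 + (2:ℝ)^((j:ℝ)) * ‖x - y‖) ^ (d+1))⁻¹) ≤
      ∑' k : ℕ, ENNReal.ofReal ((((2:ℝ)^(k:ℕ)) ^ (d+1))⁻¹) *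
        (Metric.closedBall x ((2:ℝ)^((k:ℝ) + 1 - (j:ℝ)))).indicator
          (fun _ => (1:ℝ≥0∞)) y := by
    intro y
    set T : ℝ := (2:ℝ)^((j:ℝ)) * ‖x - y‖ with hT
    have hT0 : 0 ≤ T := by positivity
    obtain ⟨k, hk1, hk2⟩ : ∃ k : ℕ, T ≤ (2:ℝ)^(k+1) ∧ (2:ℝ)^(k:ℕ) ≤ 1 + T := by
      by_cases hTle : T ≤ 1
      · exact ⟨0, by norm_num; linarith, by norm_num; linarith⟩
      · push_neg at hTle
        set n : ℕ := ⌊T⌋₊ with hn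
        have hn1 : 1 ≤ n := Nat.le_floor (by push_cast; linarith)
        refine ⟨Nat.log 2 n, ?_, ?_⟩
        · have h1 : n < 2 ^ (Nat.log 2 n + 1) := Nat.lt_pow_succ_log_self (by norm_num) n
          have h2' : T < n + 1 := Nat.lt_floor_add_one T
          have : (n:ℝ) + 1 ≤ (2:ℝ) ^ (Nat.log 2 n + 1) := by
            exact_mod_cast Nat.succ_le_of_lt h1
          linarith
        · have h1 : 2 ^ (Nat.log 2 n) ≤ n := Nat.pow_log_le_self 2 (by omega)
          have h2' : (n:ℝ) ≤ T := Nat.floor_le hT0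
          have : ((2:ℝ)) ^ (Nat.log 2 n) ≤ (n:ℝ) := by exact_mod_cast h1
          linarith
    refine le_trans ?_ (ENNReal.le_tsum k)
    have hmem : y ∈ Metric.closedBall x ((2:ℝ)^((k:ℝ) + 1 - (j:ℝ))) := by
      rw [Metric.mem_closedBall, dist_eq_norm, norm_sub_rev]
      have hxy : ‖x - y‖ = (2:ℝ)^(-(j:ℝ)) * T := by
        rw [hT, ← mul_assoc, ← Real.rpow_add h2]
        simp
      rw [hxy]
      calc (2:ℝ)^(-(j:ℝ)) * T ≤ (2:ℝ)^(-(j:ℝ)) * (2:ℝ)^(k+1) := by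
            apply mul_le_mul_of_nonneg_left hk1 (le_of_lt (Real.rpow_pos_of_pos h2 _))
        _ = (2:ℝ)^((k:ℝ) + 1 - (j:ℝ)) := by
            rw [← Real.rpow_natCast (2:ℝ) (k+1), ← Real.rpow_add h2]
            push_cast
            ring_nf
    rw [Set.indicator_of_mem hmem, mul_one]
    apply ENNReal.ofReal_le_ofReal
    apply inv_anti₀ (by positivity)
    apply pow_le_pow_left₀ (by positivity) hk2
  calc ∫⁻ y, ENNReal.ofReal (((1 + (2:ℝ)^((j:ℝ)) * ‖x - y‖) ^ (d+1))⁻¹) ∂ν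
      ≤ ∫⁻ y, (∑' k : ℕ, ENNReal.ofReal ((((2:ℝ)^(k:ℕ)) ^ (d+1))⁻¹) *
          (Metric.closedBall x ((2:ℝ)^((k:ℝ) + 1 - (j:ℝ)))).indicator
            (fun _ => (1:ℝ≥0∞)) y) ∂ν := lintegral_mono claim
    _ = ∑' k : ℕ, ∫⁻ y, ENNReal.ofReal ((((2:ℝ)^(k:ℕ)) ^ (d+1))⁻¹) *
          (Metric.closedBall x ((2:ℝ)^((k:ℝ) + 1 - (j:ℝ)))).indicator
            (fun _ => (1:ℝ≥0∞)) y ∂ν := by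
        apply lintegral_tsum
        intro k
        exact (measurable_const.indicator measurableSet_closedBall).const_mul _ |>.aemeasurable
    _ ≤ ∑' k : ℕ, ENNReal.ofReal (CF * (2:ℝ)^((d:ℝ)) * (2:ℝ)^(-(j:ℝ)*sν)) * (2⁻¹)^k := by
        apply ENNReal.tsum_le_tsum
        intro k
        rw [lintegral_const_mul _ (measurable_const.indicator measurableSet_closedBall)]
        have hint : ∫⁻ y, (Metric.closedBall x ((2:ℝ)^((k:ℝ) + 1 - (j:ℝ)))).indicator
            (fun _ => (1:ℝ≥0∞)) y ∂ν = ν (Metric.closedBall x ((2:ℝ)^((k:ℝ) + 1 - (j:ℝ)))) := by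
          rw [lintegral_indicator measurableSet_closedBall]
          simp
        rw [hint]
        have hfro := hF x _ (Real.rpow_pos_of_pos h2 ((k:ℝ) + 1 - (j:ℝ)))
        calc ENNReal.ofReal ((((2:ℝ)^(k:ℕ)) ^ (d+1))⁻¹) * ν (Metric.closedBall x ((2:ℝ)^((k:ℝ) + 1 - (j:ℝ))))
            ≤ ENNReal.ofReal ((((2:ℝ)^(k:ℕ)) ^ (d+1))⁻¹) *
              ENNReal.ofReal (CF * ((2:ℝ)^((k:ℝ) + 1 - (j:ℝ))) ^ sν) := by gcongr
          _ = ENNReal.ofReal ((((2:ℝ)^(k:ℕ)) ^ (d+1))⁻¹ *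
              (CF * ((2:ℝ)^((k:ℝ) + 1 - (j:ℝ))) ^ sν)) := by
              rw [← ENNReal.ofReal_mul (by positivity)]
          _ ≤ ENNReal.ofReal (CF * (2:ℝ)^((d:ℝ)) * (2:ℝ)^(-(j:ℝ)*sν) * (2:ℝ)^(-(k:ℝ))) := by
              apply ENNReal.ofReal_le_ofReal
              -- key real computation
              have e1 : (((2:ℝ)^(k:ℕ)) ^ (d+1))⁻¹ = (2:ℝ)^(-((k:ℝ) * ((d:ℝ)+1))) := by
                rw [← Real.rpow_natCast (2:ℝ) k, ← Real.rpow_natCast _ (d+1),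
                  ← Real.rpow_mul (le_of_lt h2), ← Real.rpow_neg (le_of_lt h2)]
                push_cast
                ring_nf
              have e2 : ((2:ℝ)^((k:ℝ) + 1 - (j:ℝ))) ^ sν = (2:ℝ)^(((k:ℝ) + 1 - (j:ℝ)) * sν) := by
                rw [← Real.rpow_mul (le_of_lt h2)]
              rw [e1, e2]
              have e3 : (2:ℝ)^(((k:ℝ) + 1 - (j:ℝ)) * sν) ≤ (2:ℝ)^(((k:ℝ) + 1) * (d:ℝ) - (j:ℝ) * sν) := by
                apply Real.rpow_le_rpow_of_exponent_le one_le_two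
                have hk0 : (0:ℝ) ≤ (k:ℝ) + 1 := by positivity
                nlinarith [mul_le_mul_of_nonneg_left hsd hk0]
              calc (2:ℝ)^(-((k:ℝ) * ((d:ℝ)+1))) * (CF * (2:ℝ)^(((k:ℝ) + 1 - (j:ℝ)) * sν))
                  ≤ (2:ℝ)^(-((k:ℝ) * ((d:ℝ)+1))) * (CF * (2:ℝ)^(((k:ℝ) + 1) * (d:ℝ) - (j:ℝ) * sν)) := by
                    apply mul_le_mul_of_nonneg_left _ (le_of_lt (Real.rpow_pos_of_pos h2 _))
                    exact mul_le_mul_of_nonneg_left e3 (le_of_lt hCF)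
                _ = CF * (2:ℝ)^((d:ℝ)) * (2:ℝ)^(-(j:ℝ)*sν) * (2:ℝ)^(-(k:ℝ)) := by
                    have lhs2 : (2:ℝ)^(-((k:ℝ) * ((d:ℝ)+1))) * (2:ℝ)^(((k:ℝ) + 1) * (d:ℝ) - (j:ℝ) * sν)
                        = (2:ℝ)^((d:ℝ) - (j:ℝ)*sν - (k:ℝ)) := by
                      rw [← Real.rpow_add h2]; ring_nf
                    have rhs2 : (2:ℝ)^((d:ℝ)) * (2:ℝ)^(-(j:ℝ)*sν) * (2:ℝ)^(-(k:ℝ))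
                        = (2:ℝ)^((d:ℝ) - (j:ℝ)*sν - (k:ℝ)) := by
                      rw [← Real.rpow_add h2, ← Real.rpow_add h2]; ring_nf
                    calc (2:ℝ)^(-((k:ℝ) * ((d:ℝ)+1))) * (CF * (2:ℝ)^(((k:ℝ) + 1) * (d:ℝ) - (j:ℝ) * sν))
                        = CF * ((2:ℝ)^(-((k:ℝ) * ((d:ℝ)+1))) * (2:ℝ)^(((k:ℝ) + 1) * (d:ℝ) - (j:ℝ) * sν)) := by ring
                      _ = CF * ((2:ℝ)^((d:ℝ)) * (2:ℝ)^(-(j:ℝ)*sν) * (2:ℝ)^(-(k:ℝ))) := by rw [lhs2, rhs2]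
                      _ = CF * (2:ℝ)^((d:ℝ)) * (2:ℝ)^(-(j:ℝ)*sν) * (2:ℝ)^(-(k:ℝ)) := by ring
          _ = ENNReal.ofReal (CF * (2:ℝ)^((d:ℝ)) * (2:ℝ)^(-(j:ℝ)*sν)) * (2⁻¹)^k := by
              rw [show (2:ℝ)^(-(k:ℝ)) = ((2:ℝ)⁻¹)^(k:ℕ) by
                  rw [← Real.rpow_natCast ((2:ℝ)⁻¹) k, ← Real.rpow_neg_one, ← Real.rpow_mul (le_of_lt h2)]
                  ring_nf,
                ENNReal.ofReal_mul (by positivity), ENNReal.ofReal_pow (by norm_num)]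
              rw [ENNReal.ofReal_inv_of_pos h2, ENNReal.ofReal_ofNat]
    _ = ENNReal.ofReal (CF * (2:ℝ)^((d:ℝ)) * (2:ℝ)^(-(j:ℝ)*sν)) * ∑' k : ℕ, ((2:ℝ≥0∞)⁻¹)^k := by
        rw [ENNReal.tsum_mul_left]
    _ ≤ 2 * ENNReal.ofReal (CF * (2:ℝ)^((d:ℝ))) * ENNReal.ofReal ((2:ℝ)^(-(j:ℝ) * sν)) := by
        rw [ENNReal.tsum_geometric, ENNReal.one_sub_inv_two, inv_inv,
          ENNReal.ofReal_mul (by positivity)]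
        ring_nf
        exact le_refl _

theorem one_add_norm_int {d : ℕ} :
    Integrable (fun w : EuclideanSpace ℝ (Fin d) => ((1 + ‖w‖) ^ (d+1))⁻¹) volume := by
  have h := integrable_one_add_norm (E := EuclideanSpace ℝ (Fin d)) (μ := volume)
    (r := ((d:ℝ)+1)) (by rw [finrank_euclideanSpace_fin]; linarith)
  apply h.congr
  filter_upwards with w
  rw [Real.rpow_neg (by positivity), ← Real.rpow_natCast (1 + ‖w‖) (d+1)]
  push_cast
  ring_nf

theorem majorant_lintegral_x {d : ℕ} (j : ℕ) (y : EuclideanSpace ℝ (Fin d)) :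
    ∫⁻ x, ENNReal.ofReal ((2:ℝ)^((j:ℝ)*d) * ((1 + (2:ℝ)^((j:ℝ)) * ‖x - y‖)^(d+1))⁻¹)
      = ENNReal.ofReal (∫ w : EuclideanSpace ℝ (Fin d), ((1 + ‖w‖)^(d+1))⁻¹) := by
  have h2 : (0:ℝ) < 2 := two_pos
  set t : ℝ := (2:ℝ)^((j:ℝ)) with ht
  have ht0 : 0 < t := Real.rpow_pos_of_pos h2 _
  set F : EuclideanSpace ℝ (Fin d) → ℝ := fun w => ((1 + ‖w‖) ^ (d+1))⁻¹ with hF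
  have hFint : Integrable F volume := one_add_norm_int
  have hg : Integrable (fun x : EuclideanSpace ℝ (Fin d) => F (t • x)) volume := by
    rw [MeasureTheory.integrable_comp_smul_iff volume F (ne_of_gt ht0)]
    exact hFint
  have hgy : Integrable (fun x : EuclideanSpace ℝ (Fin d) => F (t • (x - y))) volume := by
    have := hg.comp_add_right (-y)
    apply this.congr
    filter_upwards with x
    rw [sub_eq_add_neg]
  have hpt : ∀ x : EuclideanSpace ℝ (Fin d),
      (1 + (2:ℝ)^((j:ℝ)) * ‖x - y‖)^(d+1) = (1 + ‖t • (x - y)‖) ^ (d+1) := by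
    intro x
    rw [norm_smul, Real.norm_eq_abs, abs_of_pos ht0]
  calc ∫⁻ x, ENNReal.ofReal ((2:ℝ)^((j:ℝ)*d) * ((1 + (2:ℝ)^((j:ℝ)) * ‖x - y‖)^(d+1))⁻¹)
      = ∫⁻ x, ENNReal.ofReal ((2:ℝ)^((j:ℝ)*d) * F (t • (x - y))) := by
        apply lintegral_congr; intro x; rw [hF]; rw [hpt x]
    _ = ENNReal.ofReal (∫ x, (2:ℝ)^((j:ℝ)*d) * F (t • (x - y))) := by
        rw [MeasureTheory.ofReal_integral_eq_lintegral_ofReal (hgy.const_mul _)]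
        filter_upwards with x
        rw [hF]
        positivity
    _ = ENNReal.ofReal ((2:ℝ)^((j:ℝ)*d) * ∫ x, F (t • (x - y))) := by
        rw [integral_const_mul]
    _ = ENNReal.ofReal (∫ w : EuclideanSpace ℝ (Fin d), ((1 + ‖w‖)^(d+1))⁻¹) := by
        congr 1
        have e1 : ∫ x, F (t • (x - y)) = ∫ x, F (t • x) := by
          have := MeasureTheory.integral_add_right_eq_self (μ := (volume : Measure (EuclideanSpace ℝ (Fin d)))) (fun x => F (t • x)) (-y)
          rw [← this]
          apply integral_congr_ae; filter_upwards with x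
          rw [sub_eq_add_neg]
        rw [e1, MeasureTheory.Measure.integral_comp_smul volume F t,
          finrank_euclideanSpace_fin, smul_eq_mul, ht]
        have habs : |(((2:ℝ)^((j:ℝ)))^(d:ℕ))⁻¹| = (2:ℝ)^(-((j:ℝ)*(d:ℝ))) := by
          rw [abs_of_pos (by positivity), ← Real.rpow_natCast ((2:ℝ)^((j:ℝ))) d,
            ← Real.rpow_mul (le_of_lt h2), ← Real.rpow_neg (le_of_lt h2)]
        rw [habs, ← mul_assoc, ← Real.rpow_add h2, add_neg_cancel, Real.rpow_zero, one_mul, hF]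

theorem schur_test {d : ℕ} (ν : Measure (EuclideanSpace ℝ (Fin d))) [IsFiniteMeasure ν]
    (K : EuclideanSpace ℝ (Fin d) → ℂ) (hKc : Continuous K)
    (M : EuclideanSpace ℝ (Fin d) → ℝ≥0∞) (hM : Measurable M)
    (hKM : ∀ w, (‖K w‖₊ : ℝ≥0∞) ≤ M w)
    (A B : ℝ≥0∞) (hA0 : A ≠ 0) (hAt : A ≠ ⊤) (hB0 : B ≠ 0) (hBt : B ≠ ⊤)
    (hA : ∀ y, ∫⁻ x, M (x - y) ≤ A) (hB : ∀ x, ∫⁻ y, M (x - y) ∂ν ≤ B)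
    (q : ℝ≥0∞) (hq : 1 ≤ q) (g : EuclideanSpace ℝ (Fin d) → ℂ) (hgm : Measurable g) :
    eLpNorm (fun x => ∫ y, K (x - y) * g y ∂ν) q volume ≤
      A ^ (1/q).toReal * B ^ (1 - (1/q).toReal) * eLpNorm g q ν := by
  set G : EuclideanSpace ℝ (Fin d) → ℝ≥0∞ := fun y => (‖g y‖₊ : ℝ≥0∞) with hG
  have hGm : Measurable G := hgm.nnnorm.coe_nnreal_ennreal
  have hMsub : Measurable fun z : EuclideanSpace ℝ (Fin d) × EuclideanSpace ℝ (Fin d) =>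
      M (z.1 - z.2) := hM.comp (measurable_fst.sub measurable_snd)
  -- pointwise bound
  have hpt : ∀ x, (‖∫ y, K (x - y) * g y ∂ν‖₊ : ℝ≥0∞) ≤ ∫⁻ y, M (x - y) * G y ∂ν := by
    intro x
    refine le_trans (enorm_integral_le_lintegral_enorm _) (lintegral_mono fun y => ?_)
    rw [enorm_mul]
    exact mul_le_mul_left (hKM _) _
  -- trivial case
  by_cases hgtop : eLpNorm g q ν = ⊤
  · rw [hgtop]
    have h1 : A ^ (1/q).toReal ≠ 0 := by
      simp [ENNReal.rpow_eq_zero_iff, hA0, hAt]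
    have h2 : B ^ (1 - (1/q).toReal) ≠ 0 := by
      simp [ENNReal.rpow_eq_zero_iff, hB0, hBt]
    rw [ENNReal.mul_top (mul_ne_zero h1 h2)]
    exact le_top
  rcases eq_top_or_lt_top q with hqtop | hqlt
  · -- q = ∞
    subst hqtop
    have hbd : ∀ x, (‖∫ y, K (x - y) * g y ∂ν‖₊ : ℝ≥0∞) ≤ B * eLpNormEssSup g ν := by
      intro x
      refine le_trans (hpt x) ?_
      calc ∫⁻ y, M (x - y) * G y ∂ν
          ≤ ∫⁻ y, M (x - y) * eLpNormEssSup g ν ∂ν := by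
            apply lintegral_mono_ae
            filter_upwards [ae_le_eLpNormEssSup (f := g) (μ := ν)] with y hy
            exact mul_le_mul_right hy _
        _ = (∫⁻ y, M (x - y) ∂ν) * eLpNormEssSup g ν := by
            rw [lintegral_mul_const' _ _ (by finiteness)]
        _ ≤ B * eLpNormEssSup g ν := mul_le_mul_left (hB x) _
    have hsimp : (1 / (⊤:ℝ≥0∞)).toReal = 0 := by simp
    rw [eLpNorm_exponent_top, eLpNorm_exponent_top, hsimp, ENNReal.rpow_zero, one_mul, sub_zero,
      ENNReal.rpow_one]
    exact essSup_le_of_ae_le _ (Filter.Eventually.of_forall hbd)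
  have hq0 : q ≠ 0 := by intro h; rw [h] at hq; exact absurd hq (by simp)
  have hswapmeas : ∀ r' : ℝ, 0 ≤ r' → AEMeasurable (Function.uncurry fun x y =>
      M (x - y) * G y ^ r') ((volume : Measure (EuclideanSpace ℝ (Fin d))).prod ν) := by
    intro r' _
    exact (hMsub.mul ((hGm.pow_const r').comp measurable_snd)).aemeasurable
  rcases eq_or_lt_of_le hq with hq1 | hq1
  · -- q = 1
    rw [← hq1]
    rw [eLpNorm_one_eq_lintegral_enorm, eLpNorm_one_eq_lintegral_enorm]
    have hsimp : (1/(1:ℝ≥0∞)).toReal = 1 := by simp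
    rw [hsimp, ENNReal.rpow_one, sub_self, ENNReal.rpow_zero, mul_one]
    calc ∫⁻ x, (‖∫ y, K (x - y) * g y ∂ν‖₊ : ℝ≥0∞)
        ≤ ∫⁻ x, ∫⁻ y, M (x - y) * G y ∂ν := lintegral_mono hpt
      _ = ∫⁻ y, (∫⁻ x, M (x - y) * G y) ∂ν := by
          apply lintegral_lintegral_swap
          simpa using hswapmeas 1 zero_le_one
      _ = ∫⁻ y, (∫⁻ x, M (x - y)) * G y ∂ν := by
          apply lintegral_congr_ae; filter_upwards with y
          exact lintegral_mul_const' _ _ ENNReal.coe_ne_top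
      _ ≤ ∫⁻ y, A * G y ∂ν := lintegral_mono fun y => mul_le_mul_left (hA y) _
      _ = A * ∫⁻ y, G y ∂ν := lintegral_const_mul A hGm
  -- 1 < q < ⊤
  set r : ℝ := q.toReal with hr
  have hr1 : 1 < r := by
    have := ENNReal.toReal_strict_mono hqlt.ne hq1
    simpa using this
  have hr0 : (0:ℝ) < r := lt_trans one_pos hr1
  set p : ℝ := r.conjExponent with hp
  have hconj : r.HolderConjugate p := Real.HolderConjugate.conjExponent hr1
  have hpq : p.HolderConjugate r := hconj.symm
  have hp1 : 1 < p := hpq.lt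
  have hp0 : (0:ℝ) < p := lt_trans one_pos hp1
  have hsum : 1/p + 1/r = 1 := by
    have := hpq.inv_add_inv_eq_one
    simpa [one_div] using this
  have key : ∀ x, ∫⁻ y, M (x - y) * G y ∂ν ≤
      B ^ (1/p) * (∫⁻ y, M (x - y) * G y ^ r ∂ν) ^ (1/r) := by
    intro x
    have hrw : ∀ y, M (x - y) * G y =
        ((fun y => (M (x - y)) ^ (1/p)) * fun y => (M (x - y)) ^ (1/r) * G y) y := by
      intro y
      simp only [Pi.mul_apply]
      have hM1 : M (x - y) ^ (1/p) * M (x - y) ^ (1/r) = M (x - y) := by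
        rw [← ENNReal.rpow_add_of_nonneg (1/p) (1/r) (one_div_nonneg.mpr (le_of_lt hp0))
          (one_div_nonneg.mpr (le_of_lt hr0)), hsum, ENNReal.rpow_one]
      rw [← mul_assoc, hM1]
    calc ∫⁻ y, M (x - y) * G y ∂ν
        = ∫⁻ y, ((fun y => (M (x - y)) ^ (1/p)) * fun y => (M (x - y)) ^ (1/r) * G y) y ∂ν := by
          exact lintegral_congr hrw
      _ ≤ (∫⁻ y, ((M (x - y)) ^ (1/p)) ^ p ∂ν) ^ (1/p) *
          (∫⁻ y, ((M (x - y)) ^ (1/r) * G y) ^ r ∂ν) ^ (1/r) := by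
          apply ENNReal.lintegral_mul_le_Lp_mul_Lq ν hpq
          · exact ((hM.comp (measurable_const.sub measurable_id)).pow_const _).aemeasurable
          · exact (((hM.comp (measurable_const.sub measurable_id)).pow_const _).mul
              hGm).aemeasurable
      _ = (∫⁻ y, M (x - y) ∂ν) ^ (1/p) * (∫⁻ y, M (x - y) * G y ^ r ∂ν) ^ (1/r) := by
          congr 1
          · congr 1
            apply lintegral_congr; intro y
            rw [← ENNReal.rpow_mul, one_div, inv_mul_cancel₀ (ne_of_gt hp0), ENNReal.rpow_one]
          · congr 1
            apply lintegral_congr; intro y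
            rw [ENNReal.mul_rpow_of_nonneg _ _ (le_of_lt hr0), ← ENNReal.rpow_mul, one_div,
              inv_mul_cancel₀ (ne_of_gt hr0), ENNReal.rpow_one]
      _ ≤ B ^ (1/p) * (∫⁻ y, M (x - y) * G y ^ r ∂ν) ^ (1/r) := by
          apply mul_le_mul_left
          exact ENNReal.rpow_le_rpow (hB x) (by positivity)
  have hinner_meas : Measurable fun x => ∫⁻ y, M (x - y) * G y ^ r ∂ν :=
    Measurable.lintegral_prod_right (hMsub.mul ((hGm.pow_const r).comp measurable_snd))
  have hGr_ne_top : ∀ y, G y ^ r ≠ ⊤ :=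
    fun y => ENNReal.rpow_ne_top_of_nonneg (le_of_lt hr0) ENNReal.coe_ne_top
  have main : ∫⁻ x, (∫⁻ y, M (x - y) * G y ^ r ∂ν) ≤ A * ∫⁻ y, G y ^ r ∂ν := by
    calc ∫⁻ x, (∫⁻ y, M (x - y) * G y ^ r ∂ν)
        = ∫⁻ y, (∫⁻ x, M (x - y) * G y ^ r) ∂ν :=
          lintegral_lintegral_swap (hswapmeas r (le_of_lt hr0))
      _ = ∫⁻ y, (∫⁻ x, M (x - y)) * G y ^ r ∂ν := by
          apply lintegral_congr_ae; filter_upwards with y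
          exact lintegral_mul_const' _ _ (hGr_ne_top y)
      _ ≤ ∫⁻ y, A * G y ^ r ∂ν := lintegral_mono fun y => mul_le_mul_left (hA y) _
      _ = A * ∫⁻ y, G y ^ r ∂ν := lintegral_const_mul A (hGm.pow_const r)
  have hq1r : (1/q).toReal = 1/r := by
    rw [ENNReal.toReal_div]
    simp [hr]
  rw [hq1r, (by linarith : (1:ℝ) - 1/r = 1/p)]
  rw [eLpNorm_eq_lintegral_rpow_enorm_toReal hq0 hqlt.ne, eLpNorm_eq_lintegral_rpow_enorm_toReal hq0 hqlt.ne]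
  calc (∫⁻ x, (‖∫ y, K (x - y) * g y ∂ν‖₊ : ℝ≥0∞) ^ q.toReal) ^ (1 / q.toReal)
      ≤ (∫⁻ x, (B ^ (1/p) * (∫⁻ y, M (x - y) * G y ^ r ∂ν) ^ (1/r)) ^ r) ^ (1/r) := by
        apply ENNReal.rpow_le_rpow _ (by positivity)
        apply lintegral_mono
        intro x
        exact ENNReal.rpow_le_rpow (le_trans (hpt x) (key x)) (le_of_lt hr0)
    _ = (B ^ (r/p) * ∫⁻ x, (∫⁻ y, M (x - y) * G y ^ r ∂ν)) ^ (1/r) := by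
        congr 1
        rw [← lintegral_const_mul _ hinner_meas]
        apply lintegral_congr; intro x
        rw [ENNReal.mul_rpow_of_nonneg _ _ (le_of_lt hr0), ← ENNReal.rpow_mul,
          ← ENNReal.rpow_mul, (by ring : 1/p * r = r/p),
          one_div_mul_cancel (ne_of_gt hr0), ENNReal.rpow_one]
    _ ≤ (B ^ (r/p) * (A * ∫⁻ y, G y ^ r ∂ν)) ^ (1/r) := by
        apply ENNReal.rpow_le_rpow _ (by positivity)
        exact mul_le_mul_right main _
    _ = A ^ (1/r) * B ^ (1/p) * (∫⁻ y, G y ^ r ∂ν) ^ (1/r) := by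
        rw [ENNReal.mul_rpow_of_nonneg _ _ (by positivity),
          ENNReal.mul_rpow_of_nonneg _ _ (by positivity), ← ENNReal.rpow_mul]
        rw [show r/p * (1/r) = 1/p by field_simp]
        ring
    _ = A ^ (1/r) * B ^ (1/p) * (∫⁻ y, (‖g y‖₊ : ℝ≥0∞) ^ q.toReal ∂ν) ^ (1/q.toReal) := by rw [hG, hr]

/-- `L^{p'}` bounds for Littlewood–Paley pieces of `gν`:
`‖P_j(gν)‖_{L^{p'}(dx)} ≤ C 2^{j(d-s_ν+η)/p} ‖g‖_{L^{p'}(ν)}`.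
Here the conjugate exponent `p'` is denoted `q` (so `1/p = 1 - 1/q`, `1 ≤ q ≤ ∞`). -/
theorem stmt_8 (d : ℕ) (hd : 1 ≤ d) (sν : ℝ) (hsν0 : 0 < sν) (hsνd : sν ≤ d)
    (ν : Measure (EuclideanSpace ℝ (Fin d))) (hνc : HasCompactSupportM ν)
    (hνF : ∃ C : ℝ, 0 < C ∧ IsFrostman ν sν C)
    (β : EuclideanSpace ℝ (Fin d) → ℝ) (hβsm : ContDiff ℝ (⊤ : ℕ∞) β)
    (hβc : HasCompactSupport β)
    (hβsupp : tsupport β ⊆ {ξ : EuclideanSpace ℝ (Fin d) | 1/2 ≤ ‖ξ‖ ∧ ‖ξ‖ ≤ 4}) :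
    ∀ η : ℝ, 0 < η → ∀ q : ℝ≥0∞, 1 ≤ q →
    ∃ C : ℝ, 0 < C ∧ ∀ (j : ℕ) (g : EuclideanSpace ℝ (Fin d) → ℂ), MemLp g q ν →
      eLpNorm (fun x : EuclideanSpace ℝ (Fin d) =>
          ∫ ξ, Complex.exp (((2 * Real.pi * (inner ℝ x ξ : ℝ)) : ℝ) * Complex.I) *
            (β ((2 : ℝ) ^ (-(j : ℝ)) • ξ) : ℂ) * fourierM ν g ξ) q volume ≤
        ENNReal.ofReal C *
          (2 : ℝ≥0∞) ^ ((j : ℝ) * ((d : ℝ) - sν + η) * (1 - (1 / q).toReal)) *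
          eLpNorm g q ν := by
  intro η hη q hq
  classical
  obtain ⟨CF, hCF, hFro⟩ := hνF
  -- ν is a finite measure
  haveI hνfin : IsFiniteMeasure ν := by
    obtain ⟨Kc, hKcc, hKnull⟩ := hνc
    obtain ⟨R, hR⟩ := hKcc.isBounded.subset_closedBall 0
    constructor
    calc ν Set.univ = ν (Kc ∪ Kcᶜ) := by rw [Set.union_compl_self]
      _ ≤ ν Kc + ν Kcᶜ := measure_union_le _ _
      _ = ν Kc := by rw [hKnull, add_zero]
      _ ≤ ν (Metric.closedBall 0 (max R 1)) := measure_mono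
          (hR.trans (Metric.closedBall_subset_closedBall (le_max_left _ _)))
      _ ≤ ENNReal.ofReal (CF * (max R 1) ^ sν) :=
          hFro 0 _ (lt_of_lt_of_le one_pos (le_max_right _ _))
      _ < ⊤ := ENNReal.ofReal_lt_top
  have h2 : (0:ℝ) < 2 := two_pos
  set φ : SchwartzMap (EuclideanSpace ℝ (Fin d)) ℂ :=
    SchwartzMap.fourierTransformCLM ℂ (myToSchwartz β hβsm hβc) with hφ
  obtain ⟨Cψ, hCψ, hψ⟩ := schwartz_decay_bound φ
  set I₀ : ℝ := ∫ w : EuclideanSpace ℝ (Fin d), ((1 + ‖w‖) ^ (d+1))⁻¹ with hI₀def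
  have hI₀ : 0 < I₀ := by
    rw [hI₀def]
    rw [MeasureTheory.integral_pos_iff_support_of_nonneg (fun w => by positivity) one_add_norm_int]
    have : Function.support (fun w : EuclideanSpace ℝ (Fin d) => ((1 + ‖w‖) ^ (d+1))⁻¹) =
        Set.univ := by
      ext w; simp only [Function.mem_support, Set.mem_univ, iff_true]
      positivity
    rw [this]
    exact IsOpen.measure_pos volume isOpen_univ ⟨0, trivial⟩
  set C₁ : ℝ := Cψ * (2 * (CF * (2:ℝ)^((d:ℝ)))) with hC₁def
  have hC₁ : 0 < C₁ := by
    rw [hC₁def]; positivity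
  refine ⟨(Cψ * I₀ + 1) * (C₁ + 1), by positivity, fun j g hgmem => ?_⟩
  -- measurable representative
  set g' : EuclideanSpace ℝ (Fin d) → ℂ := hgmem.1.mk g with hg'def
  have hg'm : Measurable g' := hgmem.1.stronglyMeasurable_mk.measurable
  have hgg' : g =ᵐ[ν] g' := hgmem.1.ae_eq_mk
  have hg'int : Integrable g' ν := (hgmem.integrable hq).congr hgg'
  have hg'norm : eLpNorm g' q ν = eLpNorm g q ν := eLpNorm_congr_ae hgg'.symm
  -- the scaled bump
  set c : ℝ := (2:ℝ) ^ (-(j:ℝ)) with hcdef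
  set t : ℝ := (2:ℝ) ^ ((j:ℝ)) with htdef
  have ht0 : 0 < t := Real.rpow_pos_of_pos h2 _
  have hc0 : c ≠ 0 := ne_of_gt (Real.rpow_pos_of_pos h2 _)
  set βj : EuclideanSpace ℝ (Fin d) → ℝ := fun ξ => β (c • ξ) with hβjdef
  have hβjc : Continuous βj := (hβsm.continuous).comp (continuous_const_smul c)
  have hβjs : HasCompactSupport βj :=
    HasCompactSupport.comp_homeomorph hβc (Homeomorph.smulOfNeZero c hc0)
  -- the kernel
  set K : EuclideanSpace ℝ (Fin d) → ℂ := fun w =>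
    ((2 : ℝ) ^ ((j : ℝ) * d)) • φ (-((2 : ℝ) ^ ((j : ℝ)) • w)) with hKdef
  have hKcont : Continuous K := by
    refine Continuous.const_smul (M := ℝ) (g := fun w => φ (-((2 : ℝ) ^ ((j : ℝ)) • w))) ?_ ((2 : ℝ) ^ ((j : ℝ) * d))
    exact φ.continuous.comp ((continuous_const_smul _).neg)
  -- rewrite the function as a kernel integral against ν
  have hfun : (fun x : EuclideanSpace ℝ (Fin d) =>
      ∫ ξ, Complex.exp (((2 * Real.pi * (inner ℝ x ξ : ℝ)) : ℝ) * Complex.I) *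
        (β ((2 : ℝ) ^ (-(j : ℝ)) • ξ) : ℂ) * fourierM ν g ξ) =
      fun x => ∫ y, K (x - y) * g' y ∂ν := by
    funext x
    have e0 : ∀ ξ, fourierM ν g ξ = fourierM ν g' ξ := by
      intro ξ
      apply integral_congr_ae
      filter_upwards [hgg'] with y hy
      rw [hy]
    calc ∫ ξ, Complex.exp (((2 * Real.pi * (inner ℝ x ξ : ℝ)) : ℝ) * Complex.I) *
          (β ((2 : ℝ) ^ (-(j : ℝ)) • ξ) : ℂ) * fourierM ν g ξ
        = ∫ ξ, Complex.exp (((2 * Real.pi * (inner ℝ x ξ : ℝ)) : ℝ) * Complex.I) * (βj ξ : ℂ) *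
          (∫ y, Complex.exp ((-(2 * Real.pi * (inner ℝ y ξ : ℝ)) : ℝ) * Complex.I) * g' y ∂ν) := by
          apply integral_congr_ae; filter_upwards with ξ
          rw [e0 ξ]
          rfl
      _ = ∫ y, (∫ ξ : EuclideanSpace ℝ (Fin d),
            Complex.exp (((2 * Real.pi * (inner ℝ (x - y) ξ : ℝ)) : ℝ) * Complex.I) * (βj ξ : ℂ)) *
          g' y ∂ν := fubini_step ν βj hβjc hβjs g' hg'int x
      _ = ∫ y, K (x - y) * g' y ∂ν := by
          apply integral_congr_ae; filter_upwards with y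
          congr 1
          exact kernel_eq (myToSchwartz β hβsm hβc) j (x - y)
  rw [hfun]
  -- the majorant kernel
  set Mj : EuclideanSpace ℝ (Fin d) → ℝ≥0∞ := fun w =>
    ENNReal.ofReal (Cψ * ((2:ℝ)^((j:ℝ)*(d:ℝ)) * ((1 + (2:ℝ)^((j:ℝ)) * ‖w‖)^(d+1))⁻¹)) with hMjdef
  have hcontd : Continuous fun w : EuclideanSpace ℝ (Fin d) =>
      ((1 + (2:ℝ)^((j:ℝ)) * ‖w‖)^(d+1))⁻¹ := by
    apply Continuous.inv₀
    · exact (continuous_const.add (continuous_const.mul continuous_norm)).pow _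
    · intro w; positivity
  have hMjm : Measurable Mj :=
    (continuous_const.mul (continuous_const.mul hcontd)).measurable.ennreal_ofReal
  have hKM : ∀ w, (‖K w‖₊ : ℝ≥0∞) ≤ Mj w := by
    intro w
    rw [← ENNReal.ofReal_coe_nnreal, coe_nnnorm]
    apply ENNReal.ofReal_le_ofReal
    have hns : ‖-((2:ℝ)^((j:ℝ)) • w)‖ = (2:ℝ)^((j:ℝ)) * ‖w‖ := by
      rw [norm_neg, norm_smul, Real.norm_eq_abs, abs_of_pos (Real.rpow_pos_of_pos h2 _)]
    calc ‖K w‖ = (2:ℝ)^((j:ℝ)*(d:ℝ)) * ‖φ (-((2:ℝ)^((j:ℝ)) • w))‖ := by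
          rw [hKdef, norm_smul, Real.norm_eq_abs, abs_of_pos (Real.rpow_pos_of_pos h2 _)]
      _ ≤ (2:ℝ)^((j:ℝ)*(d:ℝ)) * (Cψ * ((1 + ‖-((2:ℝ)^((j:ℝ)) • w)‖)^(d+1))⁻¹) := by
          apply mul_le_mul_of_nonneg_left (hψ _) (le_of_lt (Real.rpow_pos_of_pos h2 _))
      _ = Cψ * ((2:ℝ)^((j:ℝ)*(d:ℝ)) * ((1 + (2:ℝ)^((j:ℝ)) * ‖w‖)^(d+1))⁻¹) := by
          rw [hns]; ring
  -- the two Schur bounds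
  have hmeasA : ∀ y : EuclideanSpace ℝ (Fin d), Measurable fun x : EuclideanSpace ℝ (Fin d) =>
      ENNReal.ofReal ((2:ℝ)^((j:ℝ)*(d:ℝ)) * ((1 + (2:ℝ)^((j:ℝ)) * ‖x - y‖)^(d+1))⁻¹) := by
    intro y
    exact (continuous_const.mul (hcontd.comp (continuous_id.sub
      continuous_const))).measurable.ennreal_ofReal
  have hA : ∀ y, ∫⁻ x, Mj (x - y) ≤ ENNReal.ofReal (Cψ * I₀) := by
    intro y
    have e : ∀ x, Mj (x - y) = ENNReal.ofReal Cψ *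
        ENNReal.ofReal ((2:ℝ)^((j:ℝ)*(d:ℝ)) * ((1 + (2:ℝ)^((j:ℝ)) * ‖x - y‖)^(d+1))⁻¹) := by
      intro x
      rw [hMjdef, ← ENNReal.ofReal_mul (le_of_lt hCψ)]
    rw [lintegral_congr e, lintegral_const_mul _ (hmeasA y), majorant_lintegral_x j y,
      ← ENNReal.ofReal_mul (le_of_lt hCψ)]
  have hmeasB : ∀ x : EuclideanSpace ℝ (Fin d), Measurable fun y : EuclideanSpace ℝ (Fin d) =>
      ENNReal.ofReal (((1 + (2:ℝ)^((j:ℝ)) * ‖x - y‖)^(d+1))⁻¹) := by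
    intro x
    exact (hcontd.comp (continuous_const.sub continuous_id)).measurable.ennreal_ofReal
  set Breal : ℝ := Cψ * (2:ℝ)^((j:ℝ)*(d:ℝ)) *
    (2 * (CF * (2:ℝ)^((d:ℝ))) * (2:ℝ)^(-(j:ℝ) * sν)) with hBrealdef
  have hBrealpos : 0 < Breal := by rw [hBrealdef]; positivity
  have hB : ∀ x, ∫⁻ y, Mj (x - y) ∂ν ≤ ENNReal.ofReal Breal := by
    intro x
    have e : ∀ y, Mj (x - y) = ENNReal.ofReal (Cψ * (2:ℝ)^((j:ℝ)*(d:ℝ))) *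
        ENNReal.ofReal (((1 + (2:ℝ)^((j:ℝ)) * ‖x - y‖)^(d+1))⁻¹) := by
      intro y
      rw [hMjdef, ← ENNReal.ofReal_mul (by positivity), mul_assoc]
    calc ∫⁻ y, Mj (x - y) ∂ν
        = ENNReal.ofReal (Cψ * (2:ℝ)^((j:ℝ)*(d:ℝ))) *
          ∫⁻ y, ENNReal.ofReal (((1 + (2:ℝ)^((j:ℝ)) * ‖x - y‖)^(d+1))⁻¹) ∂ν := by
          rw [lintegral_congr e, lintegral_const_mul _ (hmeasB x)]
      _ ≤ ENNReal.ofReal (Cψ * (2:ℝ)^((j:ℝ)*(d:ℝ))) *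
          (2 * ENNReal.ofReal (CF * (2:ℝ)^((d:ℝ))) * ENNReal.ofReal ((2:ℝ)^(-(j:ℝ) * sν))) := by
          apply mul_le_mul_right
          exact frostman_decay_sum sν CF hsν0 hsνd hCF ν hFro x j
      _ = ENNReal.ofReal Breal := by
          rw [hBrealdef]
          rw [show (2:ℝ≥0∞) = ENNReal.ofReal 2 from (ENNReal.ofReal_ofNat 2).symm]
          rw [← ENNReal.ofReal_mul (by norm_num), ← ENNReal.ofReal_mul (by positivity),
            ← ENNReal.ofReal_mul (by positivity)]
  -- apply the Schur test
  have hbound := schur_test ν K hKcont Mj hMjm hKM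
    (ENNReal.ofReal (Cψ * I₀)) (ENNReal.ofReal Breal)
    (ne_of_gt (ENNReal.ofReal_pos.mpr (by positivity))) ENNReal.ofReal_ne_top
    (ne_of_gt (ENNReal.ofReal_pos.mpr hBrealpos)) ENNReal.ofReal_ne_top
    hA hB q hq g' hg'm
  rw [hg'norm] at hbound
  refine le_trans hbound ?_
  apply mul_le_mul_left
  -- exponent bookkeeping
  set a : ℝ := (1/q).toReal with hadef
  have ha0 : 0 ≤ a := ENNReal.toReal_nonneg
  have ha1 : a ≤ 1 := by
    rw [hadef]
    calc (1/q).toReal ≤ (1:ℝ≥0∞).toReal := by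
          apply ENNReal.toReal_mono ENNReal.one_ne_top
          rw [one_div]
          exact ENNReal.inv_le_one.mpr hq
      _ = 1 := by simp
  have hb0 : 0 ≤ 1 - a := by linarith
  have hb1 : 1 - a ≤ 1 := by linarith
  -- split B
  have hBsplit : ENNReal.ofReal Breal =
      ENNReal.ofReal C₁ * (2:ℝ≥0∞) ^ ((j:ℝ) * ((d:ℝ) - sν)) := by
    have hreal : Breal = C₁ * (2:ℝ)^((j:ℝ) * ((d:ℝ) - sν)) := by
      rw [hBrealdef, hC₁def]
      have : (2:ℝ)^((j:ℝ)*(d:ℝ)) * (2:ℝ)^(-(j:ℝ) * sν) = (2:ℝ)^((j:ℝ) * ((d:ℝ) - sν)) := by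
        rw [← Real.rpow_add h2]; ring_nf
      calc Cψ * (2:ℝ)^((j:ℝ)*(d:ℝ)) * (2 * (CF * (2:ℝ)^((d:ℝ))) * (2:ℝ)^(-(j:ℝ) * sν))
          = Cψ * (2 * (CF * (2:ℝ)^((d:ℝ)))) *
            ((2:ℝ)^((j:ℝ)*(d:ℝ)) * (2:ℝ)^(-(j:ℝ) * sν)) := by ring
        _ = Cψ * (2 * (CF * (2:ℝ)^((d:ℝ)))) * (2:ℝ)^((j:ℝ) * ((d:ℝ) - sν)) := by rw [this]
    rw [hreal, ENNReal.ofReal_mul (by positivity)]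
    congr 1
    rw [show (2:ℝ≥0∞) = ENNReal.ofReal 2 from (ENNReal.ofReal_ofNat 2).symm]
    rw [ENNReal.ofReal_rpow_of_pos h2]
  rw [hBsplit]
  rw [ENNReal.mul_rpow_of_nonneg _ _ hb0]
  have hfactor1 : (ENNReal.ofReal (Cψ * I₀)) ^ a ≤ ENNReal.ofReal (Cψ * I₀ + 1) := by
    calc (ENNReal.ofReal (Cψ * I₀)) ^ a ≤ (ENNReal.ofReal (Cψ * I₀ + 1)) ^ a := by
          apply ENNReal.rpow_le_rpow _ ha0
          exact ENNReal.ofReal_le_ofReal (by linarith)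
      _ ≤ (ENNReal.ofReal (Cψ * I₀ + 1)) ^ (1:ℝ) := by
          apply ENNReal.rpow_le_rpow_of_exponent_le _ ha1
          exact ENNReal.one_le_ofReal.mpr (by nlinarith)
      _ = ENNReal.ofReal (Cψ * I₀ + 1) := ENNReal.rpow_one _
  have hfactor2 : (ENNReal.ofReal C₁) ^ (1 - a) ≤ ENNReal.ofReal (C₁ + 1) := by
    calc (ENNReal.ofReal C₁) ^ (1 - a) ≤ (ENNReal.ofReal (C₁ + 1)) ^ (1 - a) := by
          apply ENNReal.rpow_le_rpow _ hb0
          exact ENNReal.ofReal_le_ofReal (by linarith)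
      _ ≤ (ENNReal.ofReal (C₁ + 1)) ^ (1:ℝ) := by
          apply ENNReal.rpow_le_rpow_of_exponent_le _ hb1
          exact ENNReal.one_le_ofReal.mpr (by linarith)
      _ = ENNReal.ofReal (C₁ + 1) := ENNReal.rpow_one _
  have hfactor3 : ((2:ℝ≥0∞) ^ ((j:ℝ) * ((d:ℝ) - sν))) ^ (1 - a) ≤
      (2:ℝ≥0∞) ^ ((j:ℝ) * ((d:ℝ) - sν + η) * (1 - a)) := by
    rw [← ENNReal.rpow_mul]
    apply ENNReal.rpow_le_rpow_of_exponent_le one_le_two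
    have hde : (d:ℝ) - sν ≤ (d:ℝ) - sν + η := by linarith
    exact mul_le_mul_of_nonneg_right
      (mul_le_mul_of_nonneg_left hde (Nat.cast_nonneg j)) hb0
  calc ENNReal.ofReal (Cψ * I₀) ^ a *
        ((ENNReal.ofReal C₁) ^ (1 - a) * ((2:ℝ≥0∞) ^ ((j:ℝ) * ((d:ℝ) - sν))) ^ (1 - a))
      ≤ ENNReal.ofReal (Cψ * I₀ + 1) * (ENNReal.ofReal (C₁ + 1) *
        (2:ℝ≥0∞) ^ ((j:ℝ) * ((d:ℝ) - sν + η) * (1 - a))) := by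
        exact mul_le_mul' hfactor1 (mul_le_mul' hfactor2 hfactor3)
    _ = ENNReal.ofReal ((Cψ * I₀ + 1) * (C₁ + 1)) *
        (2:ℝ≥0∞) ^ ((j:ℝ) * ((d:ℝ) - sν + η) * (1 - a)) := by
        rw [ENNReal.ofReal_mul (by positivity)]
        ring
end
end
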